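/- arXiv:1406.6670 — 4 statements merged into one kernel-verified Lean document; each statement's English description precedes it below -/
import Mathlib

section
/- A bounded sequence of real numbers (a_n) strongly Cesàro converges to a real number a (i.e., (1/n)·∑_{k=0}^{n-1} |a_k − a| → 0) if and only if there exists a set T ⊆ ℕ of full density (i.e., |T ∩ {0,…,n−1}|/n → 1) such that a_n → a along n ∈ T. -/
open scoped Classical

open Filter Finset

/-! The sets whose complement has natural density zero form a filter `fullDensity`. For a
bounded nonnegative sequence, Cesàro convergence to `0` is equivalent to convergence along this
filter: Markov's inequality gives one direction, and splitting the Cesàro sum according to whether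
a term is below `ε` gives the other. Finally, convergence along `fullDensity` to a point with a
countable neighbourhood basis `S j` is convergence along a single full-density set: choosing
thresholds `N j` past which `(S j)ᶜ` has relative density below `1 / (j + 1)`, the set
`T = {k | ∀ j, N j ≤ k → k ∈ S j}` still has full density, since below `n` its complement is
contained in the complement of the single set `S J` with `J` the largest index such that
`N J ≤ n`. -/

/-- Stated with `Set.indicator` rather than `#{k ∈ range n | k ∈ E}` to avoid mismatching
`Decidable (k ∈ E)` instances. -/
noncomputable def countBelow (E : Set ℕ) (n : ℕ) : ℝ := ∑ k ∈ range n, E.indicator 1 k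

theorem countBelow_nonneg (E : Set ℕ) (n : ℕ) : 0 ≤ countBelow E n :=
  sum_nonneg fun _ _ => Set.indicator_nonneg (fun _ _ => zero_le_one) _

theorem countBelow_mono {E F : Set ℕ} {n : ℕ} (h : ∀ k < n, k ∈ E → k ∈ F) :
    countBelow E n ≤ countBelow F n :=
  sum_le_sum fun k hk => Set.indicator_apply_le' (fun hkE => by simp [h k (mem_range.1 hk) hkE])
    fun _ => Set.indicator_nonneg (fun _ _ => zero_le_one) _

theorem countBelow_union_le (E F : Set ℕ) (n : ℕ) :
    countBelow (E ∪ F) n ≤ countBelow E n + countBelow F n := by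
  rw [countBelow, countBelow, countBelow, ← sum_add_distrib]
  refine sum_le_sum fun k _ => ?_
  rw [← Pi.add_apply, ← Set.indicator_union_add_inter, Pi.add_apply]
  exact le_add_of_nonneg_right (Set.indicator_nonneg (fun _ _ => zero_le_one) _)

theorem countBelow_add_countBelow_compl (E : Set ℕ) (n : ℕ) :
    countBelow E n + countBelow Eᶜ n = n := by
  rw [countBelow, countBelow, ← sum_add_distrib]
  simp_rw [← Pi.add_apply (E.indicator 1), Set.indicator_self_add_compl]
  simp

theorem countBelow_Iio_le (N n : ℕ) : countBelow (Set.Iio N) n ≤ N :=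
  calc countBelow (Set.Iio N) n ≤ ∑ k ∈ range n ∪ range N, (Set.Iio N).indicator 1 k :=
        sum_le_sum_of_subset_of_nonneg subset_union_left
          fun _ _ _ => Set.indicator_nonneg (fun _ _ => zero_le_one) _
    _ = N := by rw [← coe_range, sum_indicator_subset _ subset_union_right]; simp

def HasDensityZero (E : Set ℕ) : Prop :=
  Tendsto (fun n : ℕ => countBelow E n / n) atTop (nhds 0)

theorem HasDensityZero.mono {E F : Set ℕ} (hF : HasDensityZero F) (hEF : E ⊆ F) :
    HasDensityZero E :=
  squeeze_zero (fun n => div_nonneg (countBelow_nonneg E n) n.cast_nonneg)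
    (fun n => by gcongr; exact countBelow_mono fun k _ hk => hEF hk) hF

theorem HasDensityZero.union {E F : Set ℕ} (hE : HasDensityZero E) (hF : HasDensityZero F) :
    HasDensityZero (E ∪ F) := by
  refine squeeze_zero (fun n => div_nonneg (countBelow_nonneg _ n) n.cast_nonneg) (fun n => ?_)
    (by simpa using hE.add hF)
  rw [← add_div]
  gcongr
  exact countBelow_union_le E F n

theorem hasDensityZero_Iio (N : ℕ) : HasDensityZero (Set.Iio N) :=
  squeeze_zero (fun n => div_nonneg (countBelow_nonneg _ n) n.cast_nonneg)
    (fun n => by gcongr; exact countBelow_Iio_le N n)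
    (tendsto_const_div_atTop_nhds_zero_nat (N : ℝ))

/-- Convergence along this filter is statistical convergence. -/
def fullDensity : Filter ℕ where
  sets := {T | HasDensityZero Tᶜ}
  univ_sets := (hasDensityZero_Iio 0).mono (by simp)
  sets_of_superset hS hST := HasDensityZero.mono hS (Set.compl_subset_compl.2 hST)
  inter_sets {S T} hS hT := by
    change HasDensityZero (S ∩ T)ᶜ
    simpa only [Set.compl_inter] using HasDensityZero.union hS hT

theorem mem_fullDensity {T : Set ℕ} : T ∈ fullDensity ↔ HasDensityZero Tᶜ := Iff.rfl

theorem fullDensity_le_atTop : fullDensity ≤ atTop := by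
  intro S hS
  obtain ⟨N, hN⟩ := mem_atTop_sets.1 hS
  exact (hasDensityZero_Iio N).mono fun k hk => not_le.1 fun h => hk (hN k h)

theorem mem_fullDensity_iff_tendsto {T : Set ℕ} :
    T ∈ fullDensity ↔
      Tendsto (fun n : ℕ => (∑ k ∈ range n, if k ∈ T then (1 : ℝ) else 0) / n) atTop (nhds 1) := by
  have hsplit : ∀ᶠ n : ℕ in atTop,
      (∑ k ∈ range n, if k ∈ T then (1 : ℝ) else 0) / n = 1 - countBelow Tᶜ n / n := by
    filter_upwards [eventually_gt_atTop 0] with n hn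
    rw [eq_sub_iff_add_eq, ← add_div, div_eq_one_iff_eq (by positivity),
      ← countBelow_add_countBelow_compl T n]
    simp only [countBelow, Set.indicator_apply, Pi.one_apply]
  rw [tendsto_congr' hsplit, mem_fullDensity, HasDensityZero]
  constructor <;> intro h <;> simpa using (tendsto_const_nhds (x := (1 : ℝ))).sub h

section Cesaro

variable {f : ℕ → ℝ}

theorem mul_countBelow_le_sum (hf : ∀ k, 0 ≤ f k) (ε : ℝ) (n : ℕ) :
    ε * countBelow {k | ε ≤ f k} n ≤ ∑ k ∈ range n, f k := by
  rw [countBelow, mul_sum]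
  refine sum_le_sum fun k _ => ?_
  by_cases h : ε ≤ f k <;> simp [h, hf k]

theorem sum_le_mul_add_mul_countBelow {ε C : ℝ} (hε : 0 ≤ ε) (hfC : ∀ k, f k ≤ C) (n : ℕ) :
    ∑ k ∈ range n, f k ≤ ε * n + C * countBelow {k | ε ≤ f k} n := by
  calc ∑ k ∈ range n, f k ≤ ∑ k ∈ range n, (ε + C * {k | ε ≤ f k}.indicator 1 k) := by
        refine sum_le_sum fun k _ => ?_
        by_cases h : ε ≤ f k
        · simpa [h] using (hfC k).trans (le_add_of_nonneg_left hε)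
        · simpa [h] using (not_le.1 h).le
    _ = ε * n + C * countBelow {k | ε ≤ f k} n := by
        rw [sum_add_distrib, sum_const, card_range, nsmul_eq_mul, mul_comm, countBelow, mul_sum]

theorem tendsto_fullDensity_nhds_zero_iff (hf : ∀ k, 0 ≤ f k) :
    Tendsto f fullDensity (nhds 0) ↔ ∀ ε > 0, HasDensityZero {k | ε ≤ f k} := by
  rw [Metric.tendsto_nhds]
  refine forall₂_congr fun ε _ => ?_
  have hcompl : {k | dist (f k) 0 < ε}ᶜ = {k | ε ≤ f k} := by
    ext k
    simp [abs_of_nonneg (hf k)]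
  rw [Filter.Eventually, mem_fullDensity, hcompl]

theorem tendsto_cesaro_zero_iff {C : ℝ} (hf : ∀ k, 0 ≤ f k) (hfC : ∀ k, f k ≤ C) :
    Tendsto (fun n : ℕ => (∑ k ∈ range n, f k) / n) atTop (nhds 0) ↔
      Tendsto f fullDensity (nhds 0) := by
  rw [tendsto_fullDensity_nhds_zero_iff hf]
  constructor
  · intro h ε hε
    refine squeeze_zero (fun n => div_nonneg (countBelow_nonneg _ n) n.cast_nonneg)
      (fun n => ?_) (by simpa using h.const_mul ε⁻¹)
    rw [← mul_div_assoc]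
    gcongr
    rw [le_inv_mul_iff₀ hε]
    exact mul_countBelow_le_sum hf ε n
  · intro h
    rw [Metric.tendsto_nhds]
    intro ε hε
    have hbad : ∀ᶠ n : ℕ in atTop, C * (countBelow {k | ε / 2 ≤ f k} n / n) < ε / 2 :=
      ((h (ε / 2) (by positivity)).const_mul C).eventually_lt_const (by simpa using half_pos hε)
    filter_upwards [hbad, eventually_gt_atTop 0] with n hbad hn
    have hn' : (0 : ℝ) < n := by exact_mod_cast hn
    rw [Real.dist_eq, sub_zero, abs_of_nonneg (div_nonneg (sum_nonneg fun k _ => hf k) hn'.le)]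
    calc (∑ k ∈ range n, f k) / n ≤ (ε / 2 * n + C * countBelow {k | ε / 2 ≤ f k} n) / n := by
          gcongr
          exact sum_le_mul_add_mul_countBelow (by positivity) hfC n
      _ = ε / 2 + C * (countBelow {k | ε / 2 ≤ f k} n / n) := by field_simp
      _ < ε := by linarith

end Cesaro

theorem exists_mem_fullDensity_eventually_mem {S : ℕ → Set ℕ} (hS : Antitone S)
    (hSd : ∀ j, S j ∈ fullDensity) : ∃ T ∈ fullDensity, ∀ j, ∀ᶠ k in atTop ⊓ 𝓟 T, k ∈ S j := by
  have hthr : ∀ j, ∀ᶠ m in atTop, ∀ n ≥ m, countBelow (S j)ᶜ n / n < 1 / (j + 1) :=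
    fun j => eventually_forall_ge_atTop.2 ((hSd j).eventually_lt_const (by positivity))
  obtain ⟨N, hN, hNS⟩ := extraction_forall_of_eventually hthr
  set T := {k | ∀ j, N j ≤ k → k ∈ S j}
  refine ⟨T, ?_, fun j => eventually_inf_principal.2 <|
    (eventually_ge_atTop (N j)).mono fun k hk hkT => hkT j hk⟩
  rw [mem_fullDensity, HasDensityZero, Metric.tendsto_nhds]
  intro ε hε
  obtain ⟨j, hj⟩ := exists_nat_one_div_lt hε
  filter_upwards [eventually_ge_atTop (N j)] with n hn
  set J := Nat.findGreatest (fun i => N i ≤ n) n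
  have hJ : N J ≤ n := Nat.findGreatest_spec (P := fun i => N i ≤ n) ((hN.id_le j).trans hn) hn
  have hjJ : j ≤ J := Nat.le_findGreatest ((hN.id_le j).trans hn) hn
  have hcount : countBelow Tᶜ n ≤ countBelow (S J)ᶜ n := by
    refine countBelow_mono fun k hkn hkT hkJ => hkT fun i hik => hS ?_ hkJ
    exact not_lt.1 fun hJi =>
      Nat.findGreatest_is_greatest hJi ((hN.id_le i).trans (hik.trans hkn.le)) (hik.trans hkn.le)
  rw [Real.dist_eq, sub_zero, abs_of_nonneg (div_nonneg (countBelow_nonneg _ n) n.cast_nonneg)]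
  calc countBelow Tᶜ n / n ≤ countBelow (S J)ᶜ n / n := by gcongr
    _ < 1 / (J + 1) := hNS J n hJ
    _ ≤ 1 / (j + 1) := by gcongr
    _ < ε := hj

theorem tendsto_fullDensity_iff_exists_mem {β : Type*} {G : Filter β} [G.IsCountablyGenerated]
    {a : ℕ → β} :
    Tendsto a fullDensity G ↔ ∃ T ∈ fullDensity, Tendsto a (atTop ⊓ 𝓟 T) G := by
  constructor
  · intro h
    obtain ⟨s, hs⟩ := G.exists_antitone_basis
    obtain ⟨T, hT, hTs⟩ := exists_mem_fullDensity_eventually_mem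
      (fun i j hij => Set.preimage_mono (hs.antitone hij)) fun j => h (hs.mem j)
    exact ⟨T, hT, hs.tendsto_right_iff.2 fun j _ => hTs j⟩
  · rintro ⟨T, hT, h⟩
    exact h.mono_left (le_inf fullDensity_le_atTop (le_principal_iff.2 hT))

/-- A bounded real sequence strongly Cesàro converges to `l` iff there is a full-density
set `T ⊆ ℕ` along which the sequence converges to `l`. -/
theorem bounded_strong_cesaro_iff_full_density
    (a : ℕ → ℝ) (l : ℝ) (M : ℝ) (hbdd : ∀ n, |a n| ≤ M) :
    Tendsto (fun n : ℕ => (∑ k ∈ Finset.range n, |a k - l|) / n) atTop (nhds 0) ↔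
      ∃ T : Set ℕ,
        Tendsto (fun n : ℕ =>
          (∑ k ∈ Finset.range n, if k ∈ T then (1 : ℝ) else 0) / n) atTop (nhds 1) ∧
        Tendsto a (atTop ⊓ Filter.principal T) (nhds l) := by
  have hbdd' : ∀ k, |a k - l| ≤ M + |l| := fun k => (abs_sub _ _).trans (by linarith [hbdd k])
  rw [tendsto_cesaro_zero_iff (fun k => abs_nonneg _) hbdd']
  simp only [← Real.norm_eq_abs, ← tendsto_iff_norm_sub_tendsto_zero, tendsto_fullDensity_iff_exists_mem,
    mem_fullDensity_iff_tendsto]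
end

section
/- Let A be a finite nonempty set, Ω = A^ℤ, T the left shift, and μ a stationary probability measure on Ω. Then μ-almost surely, (1/N)∑_{n=0}^{N-1} ‖μ(ζ_n = · | ζ_0,…,ζ_{n-1}) − μ(ζ_n = · | F_{−∞}^{n-1})‖ → 0 as N → ∞. That is, a Bayesian observer who sees the process only from time 0 onward makes, in strong Cesàro sense, the same one-step predictions as one who knows the entire infinite past. -/
open MeasureTheory Filter

/-- The left shift on `A^ℤ`. -/
def shiftZ {A : Type*} (ω : ℤ → A) : ℤ → A := fun n => ω (n + 1)

/-- The σ-algebra on `A^ℤ` generated by the coordinates with index in `s`. -/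
def coordSigma (A : Type*) [MeasurableSpace A] (s : Set ℤ) : MeasurableSpace (ℤ → A) :=
  ⨆ k ∈ s, MeasurableSpace.comap (fun ω : ℤ → A => ω k) inferInstance

/-- A version of the conditional probability `μ(ζ_n = a | m)`, as a conditional
expectation of the indicator of `{ζ_n = a}`. -/
noncomputable def condProbCoord {A : Type*} [MeasurableSpace A] [DecidableEq A]
    (μ : Measure (ℤ → A)) (m : MeasurableSpace (ℤ → A)) (n : ℤ) (a : A) : (ℤ → A) → ℝ :=
  μ[fun ω => if ω n = a then (1 : ℝ) else 0 | m]

/-!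
Let `pₙ(a) = μ(ζ₀ = a | ζ₋ₙ, …, ζ₋₁)` and `q(a) = μ(ζ₀ = a | F_{-∞}^{-1})`. By stationarity the
`n`-th summand equals `gₙ ∘ Tⁿ` with `gₙ = max_a |pₙ(a) - q(a)|`, and `gₙ → 0` a.s. by Lévy's
upward theorem. Breiman's lemma then says that the Cesàro averages of `gₙ ∘ Tⁿ` tend to `0`:
`gₙ ≤ Gₘ := sup_{k ≥ m} g_k` for `n ≥ m`, the maximal ergodic inequality bounds the probability
that the averages of `Gₘ ∘ Tⁿ` ever exceed `c` by `E Gₘ / c`, and `E Gₘ → 0` by dominated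
convergence.
-/

open Finset Topology

theorem tendsto_iSup_add_of_tendsto {u : ℕ → ℝ} {L : ℝ} (hu : Tendsto u atTop (𝓝 L)) :
    Tendsto (fun m => ⨆ n, u (m + n)) atTop (𝓝 L) := by
  have hbdd : ∀ m, BddAbove (Set.range fun n => u (m + n)) := fun m =>
    hu.bddAbove_range.mono (Set.range_comp_subset_range _ u)
  refine tendsto_order.2 ⟨fun a ha => ?_, fun b hb => ?_⟩
  · filter_upwards [hu.eventually (lt_mem_nhds ha)] with m hm
    exact hm.trans_le (le_ciSup (hbdd m) 0)
  · obtain ⟨c, hLc, hcb⟩ := exists_between hb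
    obtain ⟨M, hM⟩ := eventually_atTop.1 (hu.eventually (gt_mem_nhds hLc))
    filter_upwards [eventually_ge_atTop M] with m hm
    exact (ciSup_le fun n => (hM _ (by omega)).le).trans_lt hcb

namespace MeasureTheory

section MaximalErgodic

variable {α : Type*} {T : α → α} {f : α → ℝ}

/-- `max (0, S₁ f, …, S_N f)` for the Birkhoff sums `Sₙ f` of `f` under `T`. -/
noncomputable def birkhoffMax (T : α → α) (f : α → ℝ) (N : ℕ) (x : α) : ℝ :=
  (range (N + 1)).sup' nonempty_range_add_one fun n => birkhoffSum T f n x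

lemma birkhoffSum_le_birkhoffMax {n N : ℕ} (h : n ≤ N) (x : α) :
    birkhoffSum T f n x ≤ birkhoffMax T f N x :=
  le_sup' (fun n => birkhoffSum T f n x) (mem_range.2 (Nat.lt_succ_of_le h))

lemma birkhoffMax_nonneg (N : ℕ) (x : α) : 0 ≤ birkhoffMax T f N x := by
  simpa using birkhoffSum_le_birkhoffMax (T := T) (f := f) (Nat.zero_le N) x

lemma birkhoffMax_mono (x : α) : Monotone fun N => birkhoffMax T f N x := fun _ _ hNM =>
  sup'_le _ _ fun _ hn =>
    birkhoffSum_le_birkhoffMax ((Nat.lt_succ_iff.1 (mem_range.1 hn)).trans hNM) x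

lemma exists_birkhoffMax_eq (N : ℕ) (x : α) :
    ∃ n ≤ N, birkhoffMax T f N x = birkhoffSum T f n x := by
  obtain ⟨n, hn, h⟩ := exists_mem_eq_sup' nonempty_range_add_one fun n => birkhoffSum T f n x
  exact ⟨n, Nat.lt_succ_iff.1 (mem_range.1 hn), h⟩

/-- The pointwise inequality behind Garsia's proof of the maximal ergodic theorem. -/
lemma birkhoffMax_le_max_add_birkhoffMax_comp (N : ℕ) (x : α) :
    birkhoffMax T f N x ≤ max (f x + birkhoffMax T f N (T x)) 0 := by
  refine sup'_le _ _ fun n hn => ?_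
  cases n with
  | zero => simp
  | succ n =>
    rw [birkhoffSum_succ']
    have hnN : n ≤ N := by have := mem_range.1 hn; omega
    exact le_max_of_le_left (by linarith [birkhoffSum_le_birkhoffMax (T := T) (f := f) hnN (T x)])

lemma iUnion_setOf_birkhoffMax_pos :
    ⋃ N, {x | 0 < birkhoffMax T f N x} = {x | ∃ n, 0 < birkhoffSum T f n x} := by
  ext x
  simp only [Set.mem_iUnion, Set.mem_ofPred_eq]
  constructor
  · rintro ⟨N, hN⟩
    obtain ⟨n, -, hn⟩ := exists_birkhoffMax_eq (T := T) (f := f) N x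
    exact ⟨n, hn ▸ hN⟩
  · rintro ⟨n, hn⟩
    exact ⟨n, hn.trans_le (birkhoffSum_le_birkhoffMax le_rfl x)⟩

variable [MeasurableSpace α] {μ : Measure α}

lemma measurable_birkhoffMax (hT : Measurable T) (hf : Measurable f) (N : ℕ) :
    Measurable (birkhoffMax T f N) :=
  measurable_range_sup'' fun _ _ =>
    Finset.measurable_sum _ fun k _ => hf.comp (hT.iterate k)

lemma integrable_birkhoffMax (hT : MeasurePreserving T μ μ) (hf : Integrable f μ) (N : ℕ) :
    Integrable (birkhoffMax T f N) μ := by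
  have hS : ∀ n, Integrable (birkhoffSum T f n) μ := fun n =>
    integrable_finsetSum _ fun k _ => (hT.iterate k).integrable_comp_of_integrable hf
  have : birkhoffMax T f N = (range (N + 1)).sup' nonempty_range_add_one (birkhoffSum T f) := by
    ext x
    simp only [birkhoffMax, Finset.sup'_apply]
  rw [this]
  exact sup'_induction (p := fun g => Integrable g μ) _ _ (fun _ h₁ _ h₂ => h₁.sup h₂)
    fun n _ => hS n

variable (hT : MeasurePreserving T μ μ) (hfm : Measurable f) (hf : Integrable f μ)
include hT hfm hf

lemma MeasurePreserving.setIntegral_birkhoffMax_pos_nonneg (N : ℕ) :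
    0 ≤ ∫ x in {x | 0 < birkhoffMax T f N x}, f x ∂μ := by
  set M := birkhoffMax T f N
  set E := {x | 0 < M x}
  have hM : Integrable M μ := integrable_birkhoffMax hT hf N
  have hMT : Integrable (fun x => M (T x)) μ := hT.integrable_comp_of_integrable hM
  have hE : MeasurableSet E :=
    measurableSet_lt measurable_const (measurable_birkhoffMax hT.measurable hfm N)
  have h_le_f : ∫ x in E, (M x - M (T x)) ∂μ ≤ ∫ x in E, f x ∂μ := by
    refine setIntegral_mono_on (hM.sub hMT).integrableOn hf.integrableOn hE fun x hx => ?_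
    rcases le_max_iff.1 (birkhoffMax_le_max_add_birkhoffMax_comp (T := T) (f := f) N x) with h | h
    · linarith
    · exact absurd hx.out (not_lt.2 h)
  have hME : ∫ x in E, M x ∂μ = ∫ x, M x ∂μ :=
    setIntegral_eq_integral_of_forall_compl_eq_zero fun x hx =>
      le_antisymm (not_lt.1 hx) (birkhoffMax_nonneg N x)
  have hMTE : ∫ x in E, M (T x) ∂μ ≤ ∫ x, M (T x) ∂μ :=
    setIntegral_le_integral hMT (.of_forall fun x => birkhoffMax_nonneg N (T x))
  have hMT_eq : ∫ x, M (T x) ∂μ = ∫ x, M x ∂μ := by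
    rw [← integral_map hT.measurable.aemeasurable
      (by rw [hT.map_eq]; exact hM.aestronglyMeasurable),
      hT.map_eq]
  rw [integral_sub hM.integrableOn hMT.integrableOn, hME] at h_le_f
  linarith

/-- **Maximal ergodic theorem**. -/
theorem MeasurePreserving.setIntegral_exists_birkhoffSum_pos_nonneg :
    0 ≤ ∫ x in {x | ∃ n, 0 < birkhoffSum T f n x}, f x ∂μ := by
  rw [← iUnion_setOf_birkhoffMax_pos]
  refine ge_of_tendsto' (tendsto_setIntegral_of_monotone (fun N => ?_) (fun N M hNM x hx => ?_)
    hf.integrableOn) (hT.setIntegral_birkhoffMax_pos_nonneg hfm hf)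
  · exact measurableSet_lt measurable_const (measurable_birkhoffMax hT.measurable hfm N)
  · exact hx.out.trans_le (birkhoffMax_mono x hNM)

end MaximalErgodic

/-- **Maximal ergodic inequality**. -/
theorem MeasurePreserving.mul_measureReal_exists_birkhoffSum_gt_le_integral {α : Type*}
    [MeasurableSpace α] {μ : Measure α} [IsFiniteMeasure μ] {T : α → α}
    (hT : MeasurePreserving T μ μ) {h : α → ℝ}
    (hm : Measurable h) (hi : Integrable h μ) (h0 : 0 ≤ᵐ[μ] h) (c : ℝ) :
    c * μ.real {x | ∃ n : ℕ, n * c < birkhoffSum T h n x} ≤ ∫ x, h x ∂μ := by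
  have hS : ∀ n x, birkhoffSum T (fun x => h x - c) n x = birkhoffSum T h n x - n * c :=
    fun n x => by simp only [birkhoffSum, sum_sub_distrib, sum_const, card_range, nsmul_eq_mul]
  have := hT.setIntegral_exists_birkhoffSum_pos_nonneg (f := fun x => h x - c)
    (hm.sub measurable_const) (hi.sub (integrable_const c))
  simp only [hS, sub_pos] at this
  rw [integral_sub hi.integrableOn (integrableOn_const (measure_ne_top _ _)), setIntegral_const,
    smul_eq_mul] at this
  linarith [setIntegral_le_integral (s := {x | ∃ n : ℕ, n * c < birkhoffSum T h n x}) hi h0]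

section Breiman

variable {α : Type*} {T : α → α} {g : ℕ → α → ℝ} {C : ℝ}

noncomputable def tailSup (g : ℕ → α → ℝ) (m : ℕ) (x : α) : ℝ := ⨆ n, g (m + n) x

lemma measurable_tailSup [MeasurableSpace α] (hgm : ∀ n, Measurable (g n)) (m : ℕ) :
    Measurable (tailSup g m) :=
  Measurable.iSup fun n => hgm (m + n)

variable (hg : ∀ n x, g n x ∈ Set.Icc 0 C)
include hg

lemma le_tailSup {m n : ℕ} (hmn : m ≤ n) (x : α) : g n x ≤ tailSup g m x := by
  obtain ⟨k, rfl⟩ := Nat.exists_eq_add_of_le hmn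
  exact le_ciSup (f := fun k => g (m + k) x) ⟨C, by rintro _ ⟨j, rfl⟩; exact (hg _ x).2⟩ k

lemma tailSup_mem_Icc (m : ℕ) (x : α) : tailSup g m x ∈ Set.Icc 0 C :=
  ⟨(hg m x).1.trans (le_tailSup hg le_rfl x), ciSup_le fun _ => (hg _ x).2⟩

lemma sum_comp_iterate_le_of_birkhoffSum_tailSup_le {m : ℕ} {c : ℝ} {x : α}
    (hx : ∀ n : ℕ, birkhoffSum T (tailSup g m) n x ≤ n * c) (N : ℕ) :
    ∑ n ∈ range N, g n (T^[n] x) ≤ m * C + N * c := by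
  have hC : 0 ≤ C := (hg 0 x).1.trans (hg 0 x).2
  calc ∑ n ∈ range N, g n (T^[n] x)
      ≤ ∑ n ∈ range N, ((if n < m then C else 0) + tailSup g m (T^[n] x)) := by
        refine sum_le_sum fun n _ => ?_
        split_ifs with hnm
        · linarith [(hg n (T^[n] x)).2, (tailSup_mem_Icc hg m (T^[n] x)).1]
        · simpa using le_tailSup hg (not_lt.1 hnm) _
    _ = ∑ n ∈ (range N).filter (· < m), C + birkhoffSum T (tailSup g m) N x := by
        rw [sum_add_distrib, sum_filter]; rfl
    _ ≤ ∑ _n ∈ range m, C + N * c := by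
        gcongr
        · exact fun n hn => mem_range.2 (mem_filter.1 hn).2
        · exact hx N
    _ = m * C + N * c := by simp

variable [MeasurableSpace α] {μ : Measure α} (hgm : ∀ n, Measurable (g n))
include hgm

lemma integrable_tailSup [IsFiniteMeasure μ] (m : ℕ) : Integrable (tailSup g m) μ :=
  (integrable_const C).mono' (measurable_tailSup hgm m).aestronglyMeasurable
    (.of_forall fun x => by
      obtain ⟨h0, h1⟩ := tailSup_mem_Icc hg m x
      rwa [Real.norm_of_nonneg h0])

variable (hto : ∀ᵐ x ∂μ, Tendsto (g · x) atTop (𝓝 0))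
include hto

lemma tendsto_integral_tailSup [IsFiniteMeasure μ] :
    Tendsto (fun m => ∫ x, tailSup g m x ∂μ) atTop (𝓝 0) := by
  simpa using tendsto_integral_of_dominated_convergence (fun _ => C)
    (fun m => (measurable_tailSup hgm m).aestronglyMeasurable) (integrable_const C)
    (fun m => .of_forall fun x => by
      obtain ⟨h0, h1⟩ := tailSup_mem_Icc hg m x
      rwa [Real.norm_of_nonneg h0])
    (hto.mono fun x hx => tendsto_iSup_add_of_tendsto hx)

lemma MeasurePreserving.ae_eventually_cesaro_comp_iterate_le [IsFiniteMeasure μ]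
    (hT : MeasurePreserving T μ μ) {c : ℝ} (hc : 0 < c) :
    ∀ᵐ x ∂μ, ∀ᶠ N : ℕ in atTop, (∑ n ∈ range N, g n (T^[n] x)) / N ≤ c := by
  set bad := {x | ¬ ∀ᶠ N : ℕ in atTop, (∑ n ∈ range N, g n (T^[n] x)) / N ≤ c}
  have hsub : ∀ m, bad ⊆ {x | ∃ n : ℕ, n * (c / 2) < birkhoffSum T (tailSup g m) n x} := by
    intro m x hx
    by_contra hx'
    simp only [Set.mem_ofPred_eq, not_exists, not_lt] at hx'
    refine hx ?_
    filter_upwards [(tendsto_const_div_atTop_nhds_zero_nat (m * C)).eventually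
      (ge_mem_nhds (half_pos hc)), eventually_gt_atTop 0] with N hN hN0
    have hN' : (0 : ℝ) < N := Nat.cast_pos.2 hN0
    rw [div_le_iff₀ hN'] at hN ⊢
    linarith [sum_comp_iterate_le_of_birkhoffSum_tailSup_le hg hx' N]
  have hbound : ∀ m, μ.real bad ≤ (∫ x, tailSup g m x ∂μ) / (c / 2) := fun m => by
    rw [le_div_iff₀' (half_pos hc)]
    exact (mul_le_mul_of_nonneg_left (measureReal_mono (hsub m)) (half_pos hc).le).trans
      (hT.mul_measureReal_exists_birkhoffSum_gt_le_integral (measurable_tailSup hgm m)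
        (integrable_tailSup hg hgm m) (.of_forall fun x => (tailSup_mem_Icc hg m x).1) _)
  have hnull : μ.real bad = 0 := le_antisymm
    (ge_of_tendsto' (by simpa using (tendsto_integral_tailSup hg hgm hto).div_const (c / 2))
      hbound) measureReal_nonneg
  exact ae_iff.2 ((measureReal_eq_zero_iff (measure_ne_top _ _)).1 hnull)

theorem MeasurePreserving.ae_tendsto_cesaro_comp_iterate_of_forall_mem_Icc [IsFiniteMeasure μ]
    (hT : MeasurePreserving T μ μ) :
    ∀ᵐ x ∂μ, Tendsto (fun N : ℕ => (∑ n ∈ range N, g n (T^[n] x)) / N) atTop (𝓝 0) := by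
  filter_upwards [ae_all_iff.2 fun k : ℕ =>
    hT.ae_eventually_cesaro_comp_iterate_le hg hgm hto (c := 1 / (k + 1)) (by positivity)]
    with x hx
  refine tendsto_order.2 ⟨fun a ha => .of_forall fun N => ha.trans_le ?_, fun b hb => ?_⟩
  · exact div_nonneg (sum_nonneg fun n _ => (hg n _).1) N.cast_nonneg
  · obtain ⟨k, hk⟩ := exists_nat_one_div_lt hb
    exact (hx k).mono fun N hN => hN.trans_lt hk

end Breiman

/-- **Breiman's lemma**, for a sequence tending to `0`. -/
theorem MeasurePreserving.ae_tendsto_cesaro_comp_iterate {α : Type*} [MeasurableSpace α]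
    {μ : Measure α} [IsFiniteMeasure μ] {T : α → α} (hT : MeasurePreserving T μ μ)
    {g : ℕ → α → ℝ} {C : ℝ} (hgm : ∀ n, Measurable (g n))
    (hg : ∀ n, ∀ᵐ x ∂μ, g n x ∈ Set.Icc 0 C) (hto : ∀ᵐ x ∂μ, Tendsto (g · x) atTop (𝓝 0)) :
    ∀ᵐ x ∂μ, Tendsto (fun N : ℕ => (∑ n ∈ range N, g n (T^[n] x)) / N) atTop (𝓝 0) := by
  -- Tail suprema need bounds everywhere; clamping changes each `gₙ` only on a null set.
  set g' : ℕ → α → ℝ := fun n x => max 0 (min (g n x) C)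
  have hgg' : ∀ n, g n =ᵐ[μ] g' n := fun n => (hg n).mono fun x hx => by
    simp only [g', min_eq_left hx.2, max_eq_right hx.1]
  have hgg'_iter : ∀ n, g n ∘ T^[n] =ᵐ[μ] g' n ∘ T^[n] := fun n =>
    ae_eq_comp (hT.iterate n).measurable.aemeasurable
      (by rw [(hT.iterate n).map_eq]; exact hgg' n)
  have hg'_bdd : ∀ n x, g' n x ∈ Set.Icc 0 (max 0 C) := fun n x =>
    ⟨le_max_left _ _, max_le_max le_rfl (min_le_right _ _)⟩
  filter_upwards [hT.ae_tendsto_cesaro_comp_iterate_of_forall_mem_Icc hg'_bdd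
      (fun n => measurable_const.max ((hgm n).min measurable_const))
      ((hto.and (ae_all_iff.2 hgg')).mono fun x hx => hx.1.congr fun n => hx.2 n),
    ae_all_iff.2 hgg'_iter] with x hx hx_iter
  refine hx.congr fun N => ?_
  congr 1
  exact sum_congr rfl fun n _ => (hx_iter n).symm

section CondExp

variable {α β : Type*} {m : MeasurableSpace β} {mα : MeasurableSpace α} {mβ : MeasurableSpace β}
  {μ : Measure α} {ν : Measure β} {T : α → β}

lemma MeasurePreserving.setIntegral_preimage {E : Type*} [NormedAddCommGroup E]
    [NormedSpace ℝ E] (hT : MeasurePreserving T μ ν) {t : Set β} (ht : MeasurableSet t)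
    {g : β → E} (hg : AEStronglyMeasurable g ν) :
    ∫ x in T ⁻¹' t, g (T x) ∂μ = ∫ y in t, g y ∂ν := by
  rw [← setIntegral_map ht (hT.map_eq.symm ▸ hg) hT.measurable.aemeasurable, hT.map_eq]

theorem MeasurePreserving.condExp_comp {E : Type*} [NormedAddCommGroup E] [NormedSpace ℝ E]
    [CompleteSpace E] [IsFiniteMeasure μ] [IsFiniteMeasure ν] (hT : MeasurePreserving T μ ν)
    (hm : m ≤ mβ) {f : β → E} (hf : Integrable f ν) :
    ν[f | m] ∘ T =ᵐ[μ] μ[f ∘ T | m.comap T] := by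
  have hm' : m.comap T ≤ mα := (MeasurableSpace.comap_mono hm).trans hT.measurable.comap_le
  have hcm : AEStronglyMeasurable (ν[f | m]) ν :=
    (stronglyMeasurable_condExp.mono hm).aestronglyMeasurable
  refine ae_eq_condExp_of_forall_setIntegral_eq hm' (hT.integrable_comp_of_integrable hf)
    (fun s _ _ => (hT.integrable_comp_of_integrable integrable_condExp).integrableOn) ?_
    (stronglyMeasurable_condExp.comp_measurable (comap_measurable T)).aestronglyMeasurable
  rintro _ ⟨t, ht, rfl⟩ _
  calc ∫ x in T ⁻¹' t, ν[f | m] (T x) ∂μ = ∫ y in t, ν[f | m] y ∂ν :=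
        hT.setIntegral_preimage (hm t ht) hcm
    _ = ∫ y in t, f y ∂ν := setIntegral_condExp hm hf ht
    _ = ∫ x in T ⁻¹' t, f (T x) ∂μ := (hT.setIntegral_preimage (hm t ht) hf.1).symm

end CondExp

end MeasureTheory

section Shift

variable {A : Type*}

lemma shiftZ_iterate_apply (n : ℕ) (ω : ℤ → A) (k : ℤ) : (shiftZ^[n] ω) k = ω (k + n) := by
  induction n generalizing ω with
  | zero => simp
  | succ n ih =>
    rw [Function.iterate_succ_apply, ih, shiftZ]
    push_cast
    ring_nf

variable [MeasurableSpace A]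

lemma coordSigma_le (s : Set ℤ) : coordSigma A s ≤ MeasurableSpace.pi :=
  iSup₂_le fun k _ => (measurable_pi_apply k).comap_le

lemma coordSigma_mono {s t : Set ℤ} (h : s ⊆ t) : coordSigma A s ≤ coordSigma A t :=
  biSup_mono h

lemma comap_shiftZ_iterate_coordSigma (n : ℕ) (s : Set ℤ) :
    (coordSigma A s).comap shiftZ^[n] = coordSigma A ((· + (n : ℤ)) '' s) := by
  simp only [coordSigma, iSup_image, MeasurableSpace.comap_iSup, MeasurableSpace.comap_comp]
  congr! with k
  exact shiftZ_iterate_apply n _ k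

def pastFiltration (A : Type*) [MeasurableSpace A] :
    Filtration ℕ (inferInstance : MeasurableSpace (ℤ → A)) where
  seq k := coordSigma A (Set.Icc (-(k : ℤ)) (-1))
  mono' _ _ hij := coordSigma_mono (Set.Icc_subset_Icc (neg_le_neg (by exact_mod_cast hij)) le_rfl)
  le' _ := coordSigma_le _

lemma iSup_pastFiltration : ⨆ k, pastFiltration A k = coordSigma A (Set.Iic (-1)) := by
  refine le_antisymm (iSup_le fun k => coordSigma_mono Set.Icc_subset_Iic_self) ?_
  refine iSup₂_le fun j (hj : j ≤ -1) => le_iSup_of_le j.natAbs ?_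
  exact le_biSup (fun k : ℤ => MeasurableSpace.comap (fun ω : ℤ → A => ω k) inferInstance)
    (show j ∈ Set.Icc (-(j.natAbs : ℤ)) (-1) from ⟨by omega, hj⟩)

end Shift

section Prediction

variable {A : Type*} [MeasurableSpace A] [DecidableEq A] {μ : Measure (ℤ → A)}

lemma ae_abs_condProbCoord_le_one (m : MeasurableSpace (ℤ → A)) (k : ℤ) (a : A) :
    ∀ᵐ ω ∂μ, |condProbCoord μ m k a ω| ≤ 1 :=
  ae_bdd_abs_condExp_of_ae_bdd_abs (.of_forall fun ω => by split_ifs <;> simp)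

lemma measurable_condProbCoord (s : Set ℤ) (k : ℤ) (a : A) :
    Measurable (condProbCoord μ (coordSigma A s) k a) :=
  (stronglyMeasurable_condExp.mono (coordSigma_le s)).measurable

lemma integrable_ite_coord_eq [MeasurableSingletonClass A] [IsFiniteMeasure μ] (k : ℤ) (a : A) :
    Integrable (fun ω : ℤ → A => if ω k = a then (1 : ℝ) else 0) μ :=
  (integrable_const 1).mono'
    (Measurable.ite (p := fun ω : ℤ → A => ω k = a)
      ((measurableSet_singleton a).preimage (measurable_pi_apply k)) measurable_const
      measurable_const).aestronglyMeasurable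
    (.of_forall fun ω => by split_ifs <;> simp)

lemma condProbCoord_comp_shiftZ_iterate [MeasurableSingletonClass A] [IsFiniteMeasure μ]
    (hμ : MeasurePreserving shiftZ μ μ) (s : Set ℤ) (n : ℕ) (k : ℤ) (a : A) :
    condProbCoord μ (coordSigma A s) k a ∘ shiftZ^[n] =ᵐ[μ]
      condProbCoord μ (coordSigma A ((· + (n : ℤ)) '' s)) (k + n) a := by
  have h := (hμ.iterate n).condExp_comp (coordSigma_le s) (integrable_ite_coord_eq k a)
  have hcomp : (fun ω : ℤ → A => if ω k = a then (1 : ℝ) else 0) ∘ shiftZ^[n] =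
      fun ω => if ω (k + n) = a then 1 else 0 := by
    ext ω
    simp only [Function.comp_apply, shiftZ_iterate_apply]
  rwa [hcomp, comap_shiftZ_iterate_coordSigma] at h

/-- The gap between the predictions of `ζ₀` from `ζ₋ₙ, …, ζ₋₁` and from the whole past. -/
noncomputable def predictionGap (μ : Measure (ℤ → A)) (n : ℕ) (ω : ℤ → A) : ℝ :=
  ⨆ a, |condProbCoord μ (coordSigma A (Set.Icc (-(n : ℤ)) (-1))) 0 a ω -
    condProbCoord μ (coordSigma A (Set.Iic (-1))) 0 a ω|

lemma measurable_predictionGap [Countable A] (n : ℕ) : Measurable (predictionGap μ n) :=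
  Measurable.iSup fun a =>
    ((measurable_condProbCoord _ 0 a).sub (measurable_condProbCoord _ 0 a)).abs

lemma ae_predictionGap_mem_Icc [Countable A] (n : ℕ) :
    ∀ᵐ ω ∂μ, predictionGap μ n ω ∈ Set.Icc 0 2 := by
  filter_upwards [ae_all_iff.2 fun a => ae_abs_condProbCoord_le_one (μ := μ) _ 0 a,
    ae_all_iff.2 fun a => ae_abs_condProbCoord_le_one (μ := μ) _ 0 a] with ω hp hq
  refine ⟨Real.iSup_nonneg fun _ => abs_nonneg _, Real.iSup_le (fun a => ?_) zero_le_two⟩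
  linarith [abs_sub _ _ |>.trans (add_le_add (hp a) (hq a))]

lemma ae_tendsto_predictionGap [Fintype A] [IsFiniteMeasure μ] :
    ∀ᵐ ω ∂μ, Tendsto (predictionGap μ · ω) atTop (𝓝 0) := by
  have hlevy : ∀ᵐ ω ∂μ, ∀ a,
      Tendsto (fun n : ℕ => condProbCoord μ (coordSigma A (Set.Icc (-(n : ℤ)) (-1))) 0 a ω)
        atTop (𝓝 (condProbCoord μ (coordSigma A (Set.Iic (-1))) 0 a ω)) := by
    refine ae_all_iff.2 fun a => ?_
    have h := tendsto_ae_condExp (μ := μ) (ℱ := pastFiltration A)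
      (fun ω => if ω 0 = a then (1 : ℝ) else 0)
    rwa [iSup_pastFiltration] at h
  filter_upwards [hlevy] with ω hω
  refine squeeze_zero (fun n => Real.iSup_nonneg fun _ => abs_nonneg _)
    (fun n => Real.iSup_le (fun a => single_le_sum (f := fun a => |condProbCoord μ
      (coordSigma A (Set.Icc (-(n : ℤ)) (-1))) 0 a ω -
        condProbCoord μ (coordSigma A (Set.Iic (-1))) 0 a ω|)
      (fun _ _ => abs_nonneg _) (mem_univ a)) (sum_nonneg fun _ _ => abs_nonneg _)) ?_
  simpa using tendsto_finsetSum univ fun a _ => (tendsto_sub_nhds_zero_iff.2 (hω a)).abs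

lemma ae_iSup_abs_sub_condProbCoord_eq_predictionGap_comp [Countable A]
    [MeasurableSingletonClass A] [IsFiniteMeasure μ] (hμ : MeasurePreserving shiftZ μ μ)
    (n : ℕ) :
    ∀ᵐ ω ∂μ, ⨆ a, |condProbCoord μ (coordSigma A (Set.Icc 0 ((n : ℤ) - 1))) n a ω -
      condProbCoord μ (coordSigma A (Set.Iic ((n : ℤ) - 1))) n a ω| =
        predictionGap μ n (shiftZ^[n] ω) := by
  have hp := condProbCoord_comp_shiftZ_iterate hμ (Set.Icc (-(n : ℤ)) (-1)) n 0
  have hq := condProbCoord_comp_shiftZ_iterate hμ (Set.Iic (-1)) n 0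
  rw [Set.image_add_const_Icc, neg_add_cancel, neg_add_eq_sub, zero_add] at hp
  rw [Set.image_add_const_Iic, neg_add_eq_sub, zero_add] at hq
  filter_upwards [ae_all_iff.2 hp, ae_all_iff.2 hq] with ω hpω hqω
  exact iSup_congr fun a => by rw [← hpω a, ← hqω a]; rfl

end Prediction

theorem strong_cesaro_predictions_finite_history_general
    {A : Type} [Fintype A] [DecidableEq A]
    [MeasurableSpace A] [MeasurableSingletonClass A]
    (μ : Measure (ℤ → A)) [IsProbabilityMeasure μ]
    (hstat : MeasurePreserving (shiftZ (A := A)) μ μ) :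
    ∀ᵐ ω ∂μ,
      Tendsto (fun N : ℕ =>
          (∑ n ∈ Finset.range N, ⨆ a : A,
            |condProbCoord μ (coordSigma A (Set.Icc 0 ((n : ℤ) - 1))) n a ω -
              condProbCoord μ (coordSigma A (Set.Iic ((n : ℤ) - 1))) n a ω|) / N)
        atTop (nhds 0) := by
  filter_upwards [hstat.ae_tendsto_cesaro_comp_iterate measurable_predictionGap
      ae_predictionGap_mem_Icc ae_tendsto_predictionGap,
    ae_all_iff.2 (ae_iSup_abs_sub_condProbCoord_eq_predictionGap_comp hstat)] with ω hω hω_eq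
  refine hω.congr fun N => ?_
  congr 1
  exact sum_congr rfl fun n _ => (hω_eq n).symm

/-- For a stationary measure on `A^ℤ`, the one-step predictions of an observer who sees
the process from time `0` onward agree, in the strong Cesàro sense and `μ`-a.s., with
those of an observer who knows the entire infinite past. -/
theorem strong_cesaro_predictions_finite_history
    {A : Type} [Fintype A] [Nonempty A] [DecidableEq A]
    [MeasurableSpace A] [MeasurableSingletonClass A]
    (μ : Measure (ℤ → A)) [IsProbabilityMeasure μ]
    (hstat : MeasurePreserving (shiftZ (A := A)) μ μ) :
    ∀ᵐ ω ∂μ,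
      Tendsto (fun N : ℕ =>
          (∑ n ∈ Finset.range N, ⨆ a : A,
            |condProbCoord μ (coordSigma A (Set.Icc 0 ((n : ℤ) - 1))) n a ω -
              condProbCoord μ (coordSigma A (Set.Iic ((n : ℤ) - 1))) n a ω|) / N)
        atTop (nhds 0) :=
  strong_cesaro_predictions_finite_history_general μ hstat
end

section
/- Let μ̃, μ be probability measures on A^ℕ (A finite) such that μ̃ weakly merges with μ. Fix a finite decision set D and a payoff function r : A × D → [0,1]. For every ε > 0 there exists N_0 such that for every N > N_0, every strategy f* that is optimal for the N-period average payoff under μ̃ is ε-optimal for the N-period average payoff under μ; that is, V_N^μ(f) ≤ V_N^μ(f*) + ε for every strategy f, where V_N^ν(f) = (1/N)·E_ν[∑_{n=0}^{N-1} r(a_n, f(a_0,…,a_{n-1}))]. -/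
open MeasureTheory Filter

/-- The one-step predictive probability `ν(ζ_n = a | a_0, …, a_{n-1})` of the measure
`ν` along the realization `ω`. -/
noncomputable def pred {A : Type*} [MeasurableSpace A] (ν : Measure (ℕ → A))
    (ω : ℕ → A) (n : ℕ) (a : A) : ℝ :=
  (ν {ω' | (∀ k < n, ω' k = ω k) ∧ ω' n = a}).toReal /
    (ν {ω' | ∀ k < n, ω' k = ω k}).toReal

/-- The expected average payoff over the first `N` periods under belief `ν`, payoff
function `r` and strategy `f` (a strategy assigns a decision to each finite history). -/
noncomputable def avgPayoff {A : Type*} [MeasurableSpace A] {D : Type*}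
    (ν : Measure (ℕ → A)) (r : A → D → ℝ) (N : ℕ)
    (f : ∀ n : ℕ, (Fin n → A) → D) : ℝ :=
  (∫ ω, (∑ n ∈ Finset.range N, r (ω n) (f n fun k => ω k.val)) ∂ν) / N

/-!
Write `N · V_N^ν(f)` as a sum over histories `y` of length `n < N`, weighted by `ν(y)`, of the
payoff of `f` expected under the predictive distribution of `ν` after `y`. Keeping the weights
of `μ` but taking the predictions of `μ̃` changes this by at most `|A|` times the `μ`-expected
sum of the sup-distances between the two predictions, and by weak merging and bounded
convergence that sum is `o(N)`. With these mixed weights `f*` is still optimal: an optimal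
strategy under `μ̃` maximizes the `μ̃`-predicted payoff after every history of positive
`μ̃`-probability, and after the others the `μ̃`-prediction vanishes. Hence
`V_N^μ(f) ≤ V_N^μ(f*) + 2|A| · o(1)`.
-/

section Cylinders

variable {A : Type*}

def history (n : ℕ) (ω : ℕ → A) : Fin n → A := fun k => ω k

lemma history_succ (n : ℕ) (ω : ℕ → A) :
    history (n + 1) ω = Fin.snoc (history n ω) (ω n) := by
  funext k
  refine Fin.lastCases ?_ (fun i => ?_) k <;> simp [history]

lemma history_succ_eq_snoc_iff {n : ℕ} {ω : ℕ → A} {y : Fin n → A} {a : A} :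
    history (n + 1) ω = Fin.snoc y a ↔ history n ω = y ∧ ω n = a := by
  rw [history_succ, Fin.snoc_inj]

variable [MeasurableSpace A]

lemma measurable_history (n : ℕ) : Measurable (history (A := A) n) :=
  measurable_pi_lambda _ fun k => measurable_pi_apply k.val

noncomputable def histProb (ν : Measure (ℕ → A)) (n : ℕ) (y : Fin n → A) : ℝ :=
  ν.real (history n ⁻¹' {y})

/-- Junk value `0` when `y` has probability `0`. -/
noncomputable def nextProb (ν : Measure (ℕ → A)) (n : ℕ) (y : Fin n → A) (a : A) : ℝ :=
  histProb ν (n + 1) (Fin.snoc y a) / histProb ν n y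

lemma pred_eq_nextProb (ν : Measure (ℕ → A)) (ω : ℕ → A) (n : ℕ) (a : A) :
    pred ν ω n a = nextProb ν n (history n ω) a := by
  have hcyl : {ω' : ℕ → A | ∀ k < n, ω' k = ω k} = history n ⁻¹' {history n ω} := by
    ext ω'
    simp [funext_iff, history, Fin.forall_iff]
  have hcyl_succ : {ω' : ℕ → A | (∀ k < n, ω' k = ω k) ∧ ω' n = a}
      = history (n + 1) ⁻¹' {Fin.snoc (history n ω) a} := by
    ext ω'
    rw [Set.mem_preimage, Set.mem_singleton_iff, history_succ_eq_snoc_iff, ← Set.mem_singleton_iff,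
      ← Set.mem_preimage, ← hcyl]
    rfl
  rw [pred, nextProb, histProb, histProb, ← hcyl, ← hcyl_succ]
  rfl

lemma histProb_nonneg (ν : Measure (ℕ → A)) (n : ℕ) (y : Fin n → A) : 0 ≤ histProb ν n y :=
  measureReal_nonneg

lemma nextProb_nonneg (ν : Measure (ℕ → A)) (n : ℕ) (y : Fin n → A) (a : A) :
    0 ≤ nextProb ν n y a :=
  div_nonneg (histProb_nonneg ..) (histProb_nonneg ..)

variable (ν : Measure (ℕ → A)) [IsFiniteMeasure ν]

lemma histProb_snoc_le (n : ℕ) (y : Fin n → A) (a : A) :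
    histProb ν (n + 1) (Fin.snoc y a) ≤ histProb ν n y := by
  refine measureReal_mono (fun ω hω => ?_)
  exact (history_succ_eq_snoc_iff.mp hω).1

lemma nextProb_le_one (n : ℕ) (y : Fin n → A) (a : A) : nextProb ν n y a ≤ 1 :=
  div_le_one_of_le₀ (histProb_snoc_le ν n y a) (histProb_nonneg ..)

lemma histProb_snoc_of_histProb_eq_zero {n : ℕ} {y : Fin n → A} (h : histProb ν n y = 0)
    (a : A) : histProb ν (n + 1) (Fin.snoc y a) = 0 :=
  le_antisymm (h ▸ histProb_snoc_le ν n y a) (histProb_nonneg ..)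

lemma histProb_mul_nextProb (n : ℕ) (y : Fin n → A) (a : A) :
    histProb ν n y * nextProb ν n y a = histProb ν (n + 1) (Fin.snoc y a) := by
  rcases eq_or_ne (histProb ν n y) 0 with h | h
  · rw [h, zero_mul, histProb_snoc_of_histProb_eq_zero ν h]
  · rw [nextProb, mul_div_cancel₀ _ h]

end Cylinders

lemma Fintype.sum_fin_succ_pi_eq_sum_snoc {α M : Type*} [Fintype α] [AddCommMonoid M] (n : ℕ)
    (G : (Fin (n + 1) → α) → M) : ∑ x, G x = ∑ y : Fin n → α, ∑ a, G (Fin.snoc y a) := by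
  rw [← (Fin.snocEquiv fun _ => α).sum_comp, Fintype.sum_prod_type, Finset.sum_comm]
  rfl

section Payoffs

variable {A : Type*} [Fintype A] [MeasurableSpace A] [MeasurableSingletonClass A]
  (ν : Measure (ℕ → A)) [IsFiniteMeasure ν]

lemma integrable_comp_history (n : ℕ) (g : (Fin n → A) → ℝ) :
    Integrable (fun ω => g (history n ω)) ν :=
  Integrable.of_finite.comp_measurable (measurable_history n)

lemma integral_comp_history (n : ℕ) (g : (Fin n → A) → ℝ) :
    ∫ ω, g (history n ω) ∂ν = ∑ y, histProb ν n y * g y := by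
  rw [← integral_map (measurable_history n).aemeasurable
    (measurable_of_finite g).aestronglyMeasurable, integral_fintype Integrable.of_finite]
  refine Finset.sum_congr rfl fun y _ => ?_
  rw [map_measureReal_apply (measurable_history n) (measurableSet_singleton y), smul_eq_mul,
    histProb]

lemma integral_payoff_eq_sum_nextProb {D : Type*} (r : A → D → ℝ) (n : ℕ)
    (g : (Fin n → A) → D) :
    ∫ ω, r (ω n) (g (history n ω)) ∂ν
      = ∑ y, histProb ν n y * ∑ a, nextProb ν n y a * r a (g y) := by
  have h := integral_comp_history ν (n + 1) fun x => r (x (Fin.last n)) (g (Fin.init x))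
  simp only [history_succ, Fin.snoc_last, Fin.init_snoc] at h
  rw [h, Fintype.sum_fin_succ_pi_eq_sum_snoc]
  simp only [Finset.mul_sum, ← mul_assoc, histProb_mul_nextProb, Fin.snoc_last, Fin.init_snoc]

/-- The total payoff of `f` over `N` periods when histories are drawn from `ν` but each next
outcome from the predictive probabilities of `ρ`. -/
noncomputable def crossPayoff {D : Type*} (ν ρ : Measure (ℕ → A)) (r : A → D → ℝ) (N : ℕ)
    (f : ∀ n : ℕ, (Fin n → A) → D) : ℝ :=
  ∑ n ∈ Finset.range N, ∑ y, histProb ν n y * ∑ a, nextProb ρ n y a * r a (f n y)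

lemma avgPayoff_eq_crossPayoff {D : Type*} (r : A → D → ℝ) (N : ℕ)
    (f : ∀ n : ℕ, (Fin n → A) → D) : avgPayoff ν r N f = crossPayoff ν ν r N f / N := by
  rw [avgPayoff, integral_finsetSum _ fun n _ => ?_]
  · exact congrArg (· / (N : ℝ)) (Finset.sum_congr rfl fun n _ =>
      integral_payoff_eq_sum_nextProb ν r n (f n))
  · change Integrable (fun ω => r (ω n) (f n (history n ω))) ν
    simpa only [history_succ, Fin.snoc_last, Fin.init_snoc] using
      integrable_comp_history ν (n + 1) fun x => r (x (Fin.last n)) (f n (Fin.init x))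

end Payoffs

lemma crossPayoff_update_sub {A D : Type*} [Fintype A] [DecidableEq A] [MeasurableSpace A]
    (ν ρ : Measure (ℕ → A)) (r : A → D → ℝ) {N n : ℕ} (hn : n < N)
    (f : ∀ n : ℕ, (Fin n → A) → D) (y : Fin n → A) (d : D) :
    crossPayoff ν ρ r N (Function.update f n (Function.update (f n) y d)) - crossPayoff ν ρ r N f
      = histProb ν n y * (∑ a, nextProb ρ n y a * r a d - ∑ a, nextProb ρ n y a * r a (f n y)) := by
  rw [crossPayoff, crossPayoff, ← Finset.sum_sub_distrib,
    Finset.sum_eq_single_of_mem n (Finset.mem_range.mpr hn)]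
  · rw [Function.update_self, ← Finset.sum_sub_distrib, Finset.sum_eq_single y]
    · rw [Function.update_self, mul_sub]
    · intro z _ hz
      rw [Function.update_of_ne hz, sub_self]
    · simp
  · intro m _ hm
    rw [Function.update_of_ne hm, sub_self]

section Optimality

variable {A D : Type*} [Fintype A] [MeasurableSpace A] [MeasurableSingletonClass A]

def IsOptimal (ρ : Measure (ℕ → A)) (r : A → D → ℝ) (N : ℕ)
    (fstar : ∀ n : ℕ, (Fin n → A) → D) : Prop :=
  ∀ f, avgPayoff ρ r N f ≤ avgPayoff ρ r N fstar

variable {ρ : Measure (ℕ → A)} [IsFiniteMeasure ρ] {r : A → D → ℝ} {N : ℕ}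
  {fstar : ∀ n : ℕ, (Fin n → A) → D}

/-- Otherwise deviating at the single history `y` would pay. -/
lemma sum_nextProb_mul_le_of_isOptimal (hopt : IsOptimal ρ r N fstar) {n : ℕ} (hn : n < N)
    (y : Fin n → A) (d : D) :
    ∑ a, nextProb ρ n y a * r a d ≤ ∑ a, nextProb ρ n y a * r a (fstar n y) := by
  classical
  rcases (histProb_nonneg ρ n y).eq_or_lt with h | h
  · simp [nextProb, ← h]
  · have hdev := hopt (Function.update fstar n (Function.update (fstar n) y d))
    rw [avgPayoff_eq_crossPayoff, avgPayoff_eq_crossPayoff,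
      div_le_div_iff_of_pos_right (Nat.cast_pos.mpr (Nat.zero_lt_of_lt hn)), ← sub_nonpos,
      crossPayoff_update_sub ρ ρ r hn] at hdev
    exact sub_nonpos.mp (nonpos_of_mul_nonpos_right hdev h)

lemma crossPayoff_le_of_isOptimal (ν : Measure (ℕ → A)) (hopt : IsOptimal ρ r N fstar)
    (f : ∀ n : ℕ, (Fin n → A) → D) : crossPayoff ν ρ r N f ≤ crossPayoff ν ρ r N fstar :=
  Finset.sum_le_sum fun n hn => Finset.sum_le_sum fun y _ =>
    mul_le_mul_of_nonneg_left
      (sum_nextProb_mul_le_of_isOptimal hopt (Finset.mem_range.mp hn) y (f n y))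
      (histProb_nonneg ..)

end Optimality

section Gap

variable {A : Type*} [MeasurableSpace A]

noncomputable def gap (ρ ρ' : Measure (ℕ → A)) (n : ℕ) (y : Fin n → A) : ℝ :=
  ⨆ a, |nextProb ρ n y a - nextProb ρ' n y a|

lemma gap_nonneg (ρ ρ' : Measure (ℕ → A)) (n : ℕ) (y : Fin n → A) : 0 ≤ gap ρ ρ' n y :=
  Real.iSup_nonneg fun _ => abs_nonneg _

lemma gap_le_one (ρ ρ' : Measure (ℕ → A)) [IsFiniteMeasure ρ] [IsFiniteMeasure ρ'] (n : ℕ)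
    (y : Fin n → A) : gap ρ ρ' n y ≤ 1 :=
  Real.iSup_le (fun a => abs_sub_le_iff.mpr
    ⟨by linarith [nextProb_le_one ρ n y a, nextProb_nonneg ρ' n y a],
     by linarith [nextProb_le_one ρ' n y a, nextProb_nonneg ρ n y a]⟩) zero_le_one

lemma abs_nextProb_sub_le_gap [Finite A] (ρ ρ' : Measure (ℕ → A)) (n : ℕ) (y : Fin n → A)
    (a : A) : |nextProb ρ n y a - nextProb ρ' n y a| ≤ gap ρ ρ' n y :=
  le_ciSup (f := fun a => |nextProb ρ n y a - nextProb ρ' n y a|) (Finite.bddAbove_range _) a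

lemma abs_sum_nextProb_mul_sub_le [Fintype A] {D : Type*} (ρ ρ' : Measure (ℕ → A))
    {r : A → D → ℝ} (hr : ∀ a d, |r a d| ≤ 1) (n : ℕ) (y : Fin n → A) (d : D) :
    |∑ a, nextProb ρ n y a * r a d - ∑ a, nextProb ρ' n y a * r a d|
      ≤ Fintype.card A * gap ρ ρ' n y := by
  rw [← Finset.sum_sub_distrib]
  calc |∑ a, (nextProb ρ n y a * r a d - nextProb ρ' n y a * r a d)|
      ≤ ∑ a, |nextProb ρ n y a * r a d - nextProb ρ' n y a * r a d| :=
        Finset.abs_sum_le_sum_abs _ _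
    _ ≤ ∑ _a : A, gap ρ ρ' n y := Finset.sum_le_sum fun a _ => by
        rw [← sub_mul, abs_mul]
        exact (mul_le_of_le_one_right (abs_nonneg _) (hr a d)).trans
          (abs_nextProb_sub_le_gap ρ ρ' n y a)
    _ = Fintype.card A * gap ρ ρ' n y := by
        rw [Finset.sum_const, Finset.card_univ, nsmul_eq_mul]

lemma abs_crossPayoff_sub_le [Fintype A] [MeasurableSingletonClass A] {D : Type*}
    (ν ρ ρ' : Measure (ℕ → A)) [IsFiniteMeasure ν] {r : A → D → ℝ} (hr : ∀ a d, |r a d| ≤ 1)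
    (N : ℕ) (f : ∀ n : ℕ, (Fin n → A) → D) :
    |crossPayoff ν ρ r N f - crossPayoff ν ρ' r N f|
      ≤ Fintype.card A * ∫ ω, ∑ n ∈ Finset.range N, gap ρ ρ' n (history n ω) ∂ν := by
  rw [integral_finsetSum _ fun n _ => integrable_comp_history ν n _, Finset.mul_sum,
    crossPayoff, crossPayoff, ← Finset.sum_sub_distrib]
  refine (Finset.abs_sum_le_sum_abs _ _).trans (Finset.sum_le_sum fun n _ => ?_)
  rw [integral_comp_history, ← Finset.sum_sub_distrib, Finset.mul_sum]
  refine (Finset.abs_sum_le_sum_abs _ _).trans (Finset.sum_le_sum fun y _ => ?_)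
  rw [← mul_sub, abs_mul, abs_of_nonneg (histProb_nonneg ν n y), mul_left_comm]
  exact mul_le_mul_of_nonneg_left (abs_sum_nextProb_mul_sub_le ρ ρ' hr n y (f n y))
    (histProb_nonneg ν n y)

noncomputable def meanGap (ρ μ : Measure (ℕ → A)) (N : ℕ) : ℝ :=
  (∫ ω, ∑ n ∈ Finset.range N, gap ρ μ n (history n ω) ∂μ) / N

end Gap

section Merging

variable {A : Type*} [Fintype A] [MeasurableSpace A] [MeasurableSingletonClass A]
  (ρ μ : Measure (ℕ → A)) [IsFiniteMeasure ρ] [IsFiniteMeasure μ]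

/-- Bounded convergence: the averaged gaps are bounded by `1`. -/
lemma tendsto_meanGap
    (hmerge : ∀ᵐ ω ∂μ, Tendsto (fun N : ℕ =>
      (∑ n ∈ Finset.range N, ⨆ a : A, |pred ρ ω n a - pred μ ω n a|) / N) atTop (nhds 0)) :
    Tendsto (meanGap ρ μ) atTop (nhds 0) := by
  have hgap (n : ℕ) : Measurable fun ω => gap ρ μ n (history n ω) :=
    (measurable_of_finite (gap ρ μ n)).comp (measurable_history n)
  have hmeas (N : ℕ) : AEStronglyMeasurable
      (fun ω => (∑ n ∈ Finset.range N, gap ρ μ n (history n ω)) / N) μ :=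
    ((Finset.measurable_sum (Finset.range N) fun n _ => hgap n).div_const _).aestronglyMeasurable
  have hbound (N : ℕ) : ∀ᵐ ω ∂μ, ‖(∑ n ∈ Finset.range N, gap ρ μ n (history n ω)) / N‖ ≤ 1 := by
    refine Eventually.of_forall fun ω => ?_
    rw [Real.norm_of_nonneg (div_nonneg (Finset.sum_nonneg fun n _ => gap_nonneg ..)
      N.cast_nonneg)]
    refine div_le_one_of_le₀ ?_ N.cast_nonneg
    simpa using Finset.sum_le_card_nsmul (Finset.range N) _ 1 fun n _ => gap_le_one ..
  simp only [pred_eq_nextProb] at hmerge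
  have hlim := tendsto_integral_of_dominated_convergence _ hmeas (integrable_const 1) hbound hmerge
  simp only [integral_zero, integral_div] at hlim
  exact hlim

lemma avgPayoff_le_add_meanGap_of_isOptimal {D : Type*} {r : A → D → ℝ}
    (hr : ∀ a d, |r a d| ≤ 1) {N : ℕ} {fstar : ∀ n : ℕ, (Fin n → A) → D}
    (hopt : IsOptimal ρ r N fstar) (f : ∀ n : ℕ, (Fin n → A) → D) :
    avgPayoff μ r N f ≤ avgPayoff μ r N fstar + 2 * Fintype.card A * meanGap ρ μ N := by
  have hf := abs_le.mp (abs_crossPayoff_sub_le μ ρ μ hr N f)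
  have hfstar := abs_le.mp (abs_crossPayoff_sub_le μ ρ μ hr N fstar)
  have hcross := crossPayoff_le_of_isOptimal μ hopt f
  rw [avgPayoff_eq_crossPayoff, avgPayoff_eq_crossPayoff, meanGap, mul_div_assoc', ← add_div]
  exact div_le_div_of_nonneg_right (by linarith) N.cast_nonneg

end Merging

theorem weak_merging_implies_eps_optimality_general
    {A : Type} [Fintype A]
    [MeasurableSpace A] [MeasurableSingletonClass A]
    (μt μ : Measure (ℕ → A)) [IsProbabilityMeasure μt] [IsProbabilityMeasure μ]
    (hweak : ∀ᵐ ω ∂μ,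
      Tendsto (fun N : ℕ =>
          (∑ n ∈ Finset.range N, ⨆ a : A, |pred μt ω n a - pred μ ω n a|) / N)
        atTop (nhds 0)) :
    ∀ ε > (0 : ℝ), ∃ N₀ : ℕ, ∀ N > N₀,
      ∀ (D : Type) (_ : Fintype D) (_ : Nonempty D) (r : A → D → ℝ),
        (∀ a d, r a d ∈ Set.Icc (0 : ℝ) 1) →
        ∀ fstar : ∀ n : ℕ, (Fin n → A) → D,
          (∀ f : ∀ n : ℕ, (Fin n → A) → D, avgPayoff μt r N f ≤ avgPayoff μt r N fstar) →
          ∀ f : ∀ n : ℕ, (Fin n → A) → D,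
            avgPayoff μ r N f ≤ avgPayoff μ r N fstar + ε := by
  intro ε hε
  have hsmall := ((tendsto_meanGap μt μ hweak).const_mul (2 * (Fintype.card A : ℝ))).eventually
    (gt_mem_nhds (by rwa [mul_zero]))
  obtain ⟨N₀, hN₀⟩ := eventually_atTop.mp hsmall
  refine ⟨N₀, fun N hN D _ _ r hr fstar hopt f => ?_⟩
  have hr_abs : ∀ a d, |r a d| ≤ 1 := fun a d =>
    abs_le.mpr ⟨by linarith [(hr a d).1], (hr a d).2⟩
  have hgap := avgPayoff_le_add_meanGap_of_isOptimal μt μ hr_abs hopt f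
  linarith [hN₀ N hN.le]

/-- If `μ̃` weakly merges with `μ` then, for every `ε > 0`, a sufficiently patient agent
optimizing against `μ̃` plays `ε`-optimally against `μ`: there is `N₀` such that for all
`N > N₀` and every decision problem with payoffs in `[0,1]`, every `N`-period optimal
strategy under `μ̃` is `ε`-optimal for `N` periods under `μ`. -/
theorem weak_merging_implies_eps_optimality
    {A : Type} [Fintype A] [Nonempty A]
    [MeasurableSpace A] [MeasurableSingletonClass A]
    (μt μ : Measure (ℕ → A)) [IsProbabilityMeasure μt] [IsProbabilityMeasure μ]
    (hweak : ∀ᵐ ω ∂μ,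
      Tendsto (fun N : ℕ =>
          (∑ n ∈ Finset.range N, ⨆ a : A, |pred μt ω n a - pred μ ω n a|) / N)
        atTop (nhds 0)) :
    ∀ ε > (0 : ℝ), ∃ N₀ : ℕ, ∀ N > N₀,
      ∀ (D : Type) (_ : Fintype D) (_ : Nonempty D) (r : A → D → ℝ),
        (∀ a d, r a d ∈ Set.Icc (0 : ℝ) 1) →
        ∀ fstar : ∀ n : ℕ, (Fin n → A) → D,
          (∀ f : ∀ n : ℕ, (Fin n → A) → D, avgPayoff μt r N f ≤ avgPayoff μt r N fstar) →
          ∀ f : ∀ n : ℕ, (Fin n → A) → D,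
            avgPayoff μ r N f ≤ avgPayoff μ r N fstar + ε :=
  weak_merging_implies_eps_optimality_general μt μ hweak
end

section
/- Let ν be a probability measure on Ω = A^ℕ (A a finite set) and let (Θ, B, λ, (ν_θ)) be the decomposition of ν induced by the future tail σ-algebra T→ = ∩_{m≥0} F_m^∞ (i.e., the conditional distributions of ν given T→). Then for λ-almost every θ, ν_θ is mixing: ν_θ(B) ∈ {0,1} for every B ∈ T→. -/
open MeasureTheory ProbabilityTheory Filter

/-- The σ-algebra on `A^ℕ` generated by the coordinates with index in `s`. -/
def coordSigmaN (A : Type*) [MeasurableSpace A] (s : Set ℕ) : MeasurableSpace (ℕ → A) :=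
  ⨆ k ∈ s, MeasurableSpace.comap (fun ω : ℕ → A => ω k) inferInstance

/-- The future tail σ-algebra `∩_m σ(ζ_m, ζ_{m+1}, …)` on `A^ℕ`. -/
def futureTail (A : Type*) [MeasurableSpace A] : MeasurableSpace (ℕ → A) :=
  ⨅ m : ℕ, coordSigmaN A (Set.Ici m)

/-!
Write `κ_θ` for the conditional distribution of `ν` given the tail `T = ⨅ₘ Fₘ`, where
`Fₘ = σ(ζₘ, ζₘ₊₁, …)`. Fix `C` in a countable π-system generating all events and let
`fₘ = ν[1_C | Fₘ]`. Each `Fₘ` is countably generated, so outside a single `ν`-null set `fₘ` is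
also a conditional expectation of `1_C` given `Fₘ` under `κ_θ`, for every `m` at once. For a
tail event `B` this gives `κ_θ(B ∩ C) = ∫_B fₘ dκ_θ` for all `m`. The reversed martingale `fₘ`
converges in `L²(ν)` (the projections onto the decreasing spaces `L²(Fₘ)`), so a subsequence
converges `ν`-a.e., hence `κ_θ`-a.e., to a `T`-measurable `g`; and `κ_θ` is concentrated where
`g = g(θ)`. Passing to the limit, `κ_θ(B ∩ C) = g(θ) κ_θ(B) = κ_θ(C) κ_θ(B)`. As there are
countably many such `C`, this makes `B` independent of itself under `κ_θ`.
-/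

open Topology

theorem Set.Countable.generatePiSystem {α : Type*} {S : Set (Set α)} (hS : S.Countable) :
    (generatePiSystem S).Countable := by
  refine ((Set.countable_ofPred_finite_subset hS).image Set.sInter).mono fun s hs => ?_
  induction hs with
  | base h =>
    exact ⟨{_}, ⟨Set.finite_singleton _, Set.singleton_subset_iff.2 h⟩, Set.sInter_singleton _⟩
  | inter _ _ _ ih₁ ih₂ =>
    obtain ⟨t₁, ⟨ht₁, hts₁⟩, rfl⟩ := ih₁
    obtain ⟨t₂, ⟨ht₂, hts₂⟩, rfl⟩ := ih₂
    exact ⟨t₁ ∪ t₂, ⟨ht₁.union ht₂, Set.union_subset hts₁ hts₂⟩, Set.sInter_union _ _⟩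

namespace MeasurableSpace.CountablyGenerated

theorem exists_isPiSystem {α : Type*} {m : MeasurableSpace α} (h : @CountablyGenerated α m) :
    ∃ P : Set (Set α), P.Countable ∧ IsPiSystem P ∧ m = generateFrom P := by
  obtain ⟨b, hb, rfl⟩ := h.isCountablyGenerated
  exact ⟨generatePiSystem b, hb.generatePiSystem, isPiSystem_generatePiSystem b,
    generateFrom_generatePiSystem_eq.symm⟩

theorem iSup {α : Type*} {ι : Sort*} [Countable ι] {m : ι → MeasurableSpace α}
    (h : ∀ i, @CountablyGenerated α (m i)) : @CountablyGenerated α (⨆ i, m i) := by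
  choose b hb hmb using fun i => (h i).isCountablyGenerated
  refine @CountablyGenerated.mk _ (⨆ i, m i) ⟨⋃ i, b i, Set.countable_iUnion hb, ?_⟩
  simp_rw [hmb, iSup_generateFrom]

end MeasurableSpace.CountablyGenerated

namespace MeasureTheory

theorem Measure.eq_of_isPiSystem_of_generateFrom {Ω : Type*} {m' : MeasurableSpace Ω}
    [mΩ : MeasurableSpace Ω] (hm' : m' ≤ mΩ) {P : Set (Set Ω)}
    (hgen : m' = MeasurableSpace.generateFrom P) (hP : IsPiSystem P) {μ ν : Measure Ω}
    [IsFiniteMeasure μ] (h : ∀ s ∈ P, μ s = ν s) (huniv : μ Set.univ = ν Set.univ) {s : Set Ω}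
    (hs : MeasurableSet[m'] s) : μ s = ν s := by
  have htrim : μ.trim hm' = ν.trim hm' := by
    refine ext_of_generate_finite P hgen hP (fun t ht => ?_) ?_
    · have htm : MeasurableSet[m'] t := hgen ▸ MeasurableSpace.measurableSet_generateFrom ht
      rw [trim_measurableSet_eq hm' htm, trim_measurableSet_eq hm' htm, h t ht]
    · rw [trim_measurableSet_eq hm' MeasurableSet.univ,
        trim_measurableSet_eq hm' MeasurableSet.univ, huniv]
  rw [← trim_measurableSet_eq hm' hs, htrim, trim_measurableSet_eq hm' hs]

theorem lpMeas_mono {Ω : Type*} {m m' : MeasurableSpace Ω} [MeasurableSpace Ω] (μ : Measure Ω)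
    (h : m ≤ m') : lpMeas ℝ ℝ m 2 μ ≤ lpMeas ℝ ℝ m' 2 μ :=
  fun _ hf => hf.mono h

end MeasureTheory

theorem ProbabilityTheory.measure_eq_zero_or_one_of_forall_measure_inter_eq_mul {Ω : Type*}
    [mΩ : MeasurableSpace Ω] {μ : Measure Ω} [IsProbabilityMeasure μ] {P : Set (Set Ω)}
    (hPpi : IsPiSystem P) (hgen : mΩ = MeasurableSpace.generateFrom P) {B : Set Ω}
    (hB : MeasurableSet B) (h : ∀ C ∈ P, μ (B ∩ C) = μ B * μ C) : μ B = 0 ∨ μ B = 1 := by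
  have hBle : MeasurableSpace.generateFrom {B} ≤ mΩ :=
    MeasurableSpace.generateFrom_le fun _ hs => (Set.mem_singleton_iff.1 hs) ▸ hB
  have hindep : Indep (MeasurableSpace.generateFrom {B}) mΩ μ :=
    IndepSets.indep hBle le_rfl (IsPiSystem.singleton B) hPpi rfl hgen
      ((IndepSets_iff _ _ _).2 fun s C hs hC => (Set.mem_singleton_iff.1 hs) ▸ h C hC)
  exact measure_eq_zero_or_one_of_indepSet_self (indep_of_indep_of_le_right hindep hBle)

section Antitone

variable {Ω : Type*} [mΩ : MeasurableSpace Ω] {μ : Measure Ω} {ℱ : ℕ → MeasurableSpace Ω}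

/- The projections onto the decreasing subspaces `L²(ℱ n)` are `1` minus the projections onto
their increasing orthogonal complements, which converge. -/
theorem exists_tendsto_condExpL2_of_antitone (hℱ : Antitone ℱ) (hle : ∀ n, ℱ n ≤ mΩ)
    (F : Lp ℝ 2 μ) :
    ∃ L, Tendsto (fun n => (condExpL2 ℝ ℝ (hle n) F : Lp ℝ 2 μ)) atTop (𝓝 L) := by
  have hU : Monotone fun n => (lpMeas ℝ ℝ (ℱ n) 2 μ)ᗮ := fun n n' h =>
    Submodule.orthogonal_le (lpMeas_mono μ (hℱ h))
  refine ⟨_, ((tendsto_const_nhds (x := F)).sub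
    (Submodule.starProjection_tendsto_closure_iSup _ hU F)).congr fun n => ?_⟩
  have : Fact (ℱ n ≤ mΩ) := ⟨hle n⟩
  rw [Submodule.starProjection_orthogonal_val, sub_sub_cancel]
  rfl

theorem exists_measurable_iInf_ae_tendsto (hℱ : Antitone ℱ) {u : ℕ → Ω → ℝ}
    (hu : ∀ k, StronglyMeasurable[ℱ k] (u k))
    (hconv : ∀ᵐ x ∂μ, ∃ l, Tendsto (fun k => u k x) atTop (𝓝 l)) :
    ∃ g : Ω → ℝ, Measurable[⨅ n, ℱ n] g ∧ ∀ᵐ x ∂μ, Tendsto (fun k => u k x) atTop (𝓝 (g x)) := by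
  refine ⟨fun x => limUnder atTop fun k => u k x, fun s hs => ?_,
    hconv.mono fun x hx => tendsto_nhds_limUnder hx⟩
  refine MeasurableSpace.measurableSet_iInf.2 fun j => ?_
  have hshift : (fun x => limUnder atTop fun k => u k x)
      = fun x => limUnder atTop fun k => u (k + j) x := by
    funext x
    conv_lhs => rw [limUnder, ← map_add_atTop_eq_nat j, map_map]
    rfl
  have hmeas : StronglyMeasurable[ℱ j] fun x => limUnder atTop fun k => u (k + j) x :=
    @StronglyMeasurable.limUnder ℕ Ω ℝ (ℱ j) _ _ atTop _ _ _ _ fun k =>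
      (hu (k + j)).mono (hℱ (Nat.le_add_left j k))
  rw [hshift]
  exact hmeas.measurable hs

theorem exists_subseq_ae_tendsto_condExp_of_antitone [IsFiniteMeasure μ] (hℱ : Antitone ℱ)
    (hle : ∀ n, ℱ n ≤ mΩ) {f : Ω → ℝ} (hf : MemLp f 2 μ) :
    ∃ φ : ℕ → ℕ, StrictMono φ ∧ ∃ g : Ω → ℝ, Measurable[⨅ n, ℱ n] g ∧
      ∀ᵐ x ∂μ, Tendsto (fun k => (μ[f | ℱ (φ k)]) x) atTop (𝓝 (g x)) := by
  obtain ⟨L, hL⟩ := exists_tendsto_condExpL2_of_antitone hℱ hle (hf.toLp f)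
  obtain ⟨φ, hφ, hφL⟩ := (tendstoInMeasure_of_tendsto_Lp hL).exists_seq_tendsto_ae
  refine ⟨φ, hφ, exists_measurable_iInf_ae_tendsto hℱ (u := fun k => μ[f | ℱ (φ k)])
    (fun k => stronglyMeasurable_condExp.mono (hℱ hφ.le_apply)) ?_⟩
  filter_upwards [hφL, ae_all_iff.2 fun k => hf.condExpL2_ae_eq_condExp (𝕜 := ℝ) (hle (φ k))]
    with x hx hcondExp
  exact ⟨_, by simpa only [hcondExp] using hx⟩

end Antitone

section CondExpKernel

variable {Ω : Type*} {m m' : MeasurableSpace Ω} [mΩ : MeasurableSpace Ω] [StandardBorelSpace Ω]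
  {μ : Measure Ω} [IsFiniteMeasure μ]

theorem ae_ae_condExpKernel_of_ae (hm : m ≤ mΩ) {p : Ω → Prop} (h : ∀ᵐ x ∂μ, p x) :
    ∀ᵐ ω ∂μ, ∀ᵐ x ∂condExpKernel μ m ω, p x :=
  ae_of_ae_trim hm (Measure.ae_ae_of_ae_comp (by rwa [condExpKernel_comp_trim hm]))

theorem ae_ae_condExpKernel_eq (hm : m ≤ mΩ) {g : Ω → ℝ} (hg : Measurable[m] g) :
    ∀ᵐ ω ∂μ, ∀ᵐ x ∂condExpKernel μ m ω, g x = g ω := by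
  have hdiag : ∀ᵐ p ∂(μ.trim hm ⊗ₘ condExpKernel μ m), g p.2 = g p.1 := by
    rw [compProd_trim_condExpKernel hm, ae_map_iff]
    · exact ae_of_all _ fun _ => rfl
    · exact @Measurable.aemeasurable _ _ _ (m.prod mΩ) _ _
        ((measurable_id'' hm).prodMk measurable_id)
    · exact measurableSet_eq_fun ((hg.mono hm le_rfl).comp measurable_snd)
        (hg.comp measurable_fst)
  exact ae_of_ae_trim hm (Measure.ae_ae_of_ae_compProd hdiag)

theorem ae_setLIntegral_condExp_indicator_eq (hm : m ≤ m') (hm' : m' ≤ mΩ) {C D : Set Ω}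
    (hC : MeasurableSet C) (hD : MeasurableSet[m'] D) :
    ∀ᵐ ω ∂μ, ∫⁻ x in D, ENNReal.ofReal ((μ⟦C | m'⟧) x) ∂condExpKernel μ m ω
      = condExpKernel μ m ω (D ∩ C) := by
  have hint : Integrable (D.indicator (μ⟦C | m'⟧)) μ :=
    integrable_condExp.indicator (hm' _ hD)
  have htower : μ[D.indicator (μ⟦C | m'⟧) | m] =ᵐ[μ] μ⟦D ∩ C | m⟧ := by
    have h := condExp_indicator (m := m') (μ := μ) ((integrable_const (1 : ℝ)).indicator hC) hD
    rw [Set.indicator_indicator] at h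
    exact (condExp_congr_ae h.symm).trans (condExp_condExp_of_le hm hm')
  have hnonneg : ∀ᵐ x ∂μ, 0 ≤ (μ⟦C | m'⟧) x :=
    condExp_nonneg (ae_of_all _ fun x => Set.indicator_nonneg (fun _ _ => zero_le_one) x)
  filter_upwards [condExp_ae_eq_integral_condExpKernel (hm.trans hm') hint, htower,
    condExpKernel_ae_eq_condExp (hm.trans hm') ((hm' _ hD).inter hC),
    (integrable_condExp (m := m') (f := C.indicator fun _ => (1 : ℝ))).condExpKernel_ae,
    ae_ae_condExpKernel_of_ae (hm.trans hm') hnonneg]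
    with ω h_kernel h_tower h_real h_int h_nonneg
  rw [← ofReal_integral_eq_lintegral_ofReal h_int.integrableOn (ae_restrict_of_ae h_nonneg),
    ← integral_indicator (hm' _ hD), ← h_kernel, h_tower, ← h_real, ofReal_measureReal]

theorem ae_forall_setLIntegral_condExp_indicator_eq (hm : m ≤ m') (hm' : m' ≤ mΩ)
    (hcg : @MeasurableSpace.CountablyGenerated Ω m') {C : Set Ω} (hC : MeasurableSet C) :
    ∀ᵐ ω ∂μ, ∀ D, MeasurableSet[m'] D →
      ∫⁻ x in D, ENNReal.ofReal ((μ⟦C | m'⟧) x) ∂condExpKernel μ m ω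
        = condExpKernel μ m ω (D ∩ C) := by
  obtain ⟨P, hPc, hPpi, hgen⟩ := hcg.exists_isPiSystem
  have hPm : ∀ s ∈ P, MeasurableSet[m'] s := fun s hs =>
    hgen ▸ MeasurableSpace.measurableSet_generateFrom hs
  have hP : ∀ᵐ ω ∂μ, ∀ D ∈ insert Set.univ P,
      ∫⁻ x in D, ENNReal.ofReal ((μ⟦C | m'⟧) x) ∂condExpKernel μ m ω
        = condExpKernel μ m ω (D ∩ C) := by
    refine (ae_ball_iff (hPc.insert _)).2 fun D hD =>
      ae_setLIntegral_condExp_indicator_eq hm hm' hC ?_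
    rcases hD with rfl | hD
    exacts [MeasurableSet.univ, hPm D hD]
  filter_upwards [hP] with ω hω D hD
  have key := Measure.eq_of_isPiSystem_of_generateFrom hm' hgen hPpi
    (μ := (condExpKernel μ m ω).restrict C)
    (ν := (condExpKernel μ m ω).withDensity fun x => ENNReal.ofReal ((μ⟦C | m'⟧) x)) ?_ ?_ hD
  · rw [withDensity_apply _ (hm' _ hD), Measure.restrict_apply (hm' _ hD)] at key
    exact key.symm
  · intro s hs
    rw [withDensity_apply _ (hm' _ (hPm s hs)), Measure.restrict_apply (hm' _ (hPm s hs)),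
      hω s (Set.mem_insert_of_mem _ hs)]
  · rw [withDensity_apply _ MeasurableSet.univ, Measure.restrict_apply MeasurableSet.univ,
      hω _ (Set.mem_insert _ _)]

end CondExpKernel

section TailKernel

variable {Ω : Type*} [mΩ : MeasurableSpace Ω] [StandardBorelSpace Ω] {μ : Measure Ω}
  [IsProbabilityMeasure μ] {ℱ : ℕ → MeasurableSpace Ω}

theorem ae_condExpKernel_iInf_inter_eq_mul (hℱ : Antitone ℱ) (hle : ∀ n, ℱ n ≤ mΩ)
    (hcg : ∀ n, @MeasurableSpace.CountablyGenerated Ω (ℱ n)) {C : Set Ω}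
    (hC : MeasurableSet C) :
    ∀ᵐ θ ∂μ, ∀ B, MeasurableSet[⨅ n, ℱ n] B →
      condExpKernel μ (⨅ n, ℱ n) θ (B ∩ C)
        = condExpKernel μ (⨅ n, ℱ n) θ B * condExpKernel μ (⨅ n, ℱ n) θ C := by
  set κ := condExpKernel μ (⨅ n, ℱ n)
  have hT : ⨅ n, ℱ n ≤ mΩ := (iInf_le ℱ 0).trans (hle 0)
  obtain ⟨φ, -, g, hg, hlim⟩ := exists_subseq_ae_tendsto_condExp_of_antitone hℱ hle
    ((memLp_const (1 : ℝ)).indicator hC) (μ := μ)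
  have hbdd : ∀ᵐ x ∂μ, ∀ k, (μ⟦C | ℱ (φ k)⟧) x ≤ 1 := ae_all_iff.2 fun k => by
    have h := ae_bdd_abs_condExp_of_ae_bdd_abs (m := ℱ (φ k)) (μ := μ) (R := (1 : ℝ))
      (f := C.indicator fun _ => (1 : ℝ)) (ae_of_all _ fun x => by
        by_cases hx : x ∈ C <;> simp [hx])
    filter_upwards [h] with x hx using (le_abs_self _).trans hx
  filter_upwards [ae_all_iff.2 fun k => ae_forall_setLIntegral_condExp_indicator_eq
      (iInf_le ℱ (φ k)) (hle (φ k)) (hcg (φ k)) hC,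
    ae_ae_condExpKernel_of_ae hT hlim, ae_ae_condExpKernel_of_ae hT hbdd,
    ae_ae_condExpKernel_eq hT hg] with θ hset hlimθ hbddθ hconst
  have key : ∀ D, MeasurableSet[⨅ n, ℱ n] D →
      κ θ (D ∩ C) = ENNReal.ofReal (g θ) * κ θ D := by
    intro D hD
    have htendsto : Tendsto (fun k => ∫⁻ x in D, ENNReal.ofReal ((μ⟦C | ℱ (φ k)⟧) x) ∂κ θ)
        atTop (𝓝 (∫⁻ x in D, ENNReal.ofReal (g x) ∂κ θ)) := by
      refine tendsto_lintegral_of_dominated_convergence 1 (fun k => ?_) (fun k => ?_) ?_ ?_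
      · exact (stronglyMeasurable_condExp.mono (hle (φ k))).measurable.ennreal_ofReal
      · exact ae_restrict_of_ae (hbddθ.mono fun x hx => ENNReal.ofReal_le_one.2 (hx k))
      · simp only [Pi.one_apply, lintegral_const, one_mul]
        exact measure_ne_top _ _
      · exact ae_restrict_of_ae (hlimθ.mono fun x hx =>
          (ENNReal.continuous_ofReal.tendsto _).comp hx)
    have hconstant : ∀ k, ∫⁻ x in D, ENNReal.ofReal ((μ⟦C | ℱ (φ k)⟧) x) ∂κ θ = κ θ (D ∩ C) :=
      fun k => hset k D (iInf_le ℱ (φ k) D hD)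
    simp only [hconstant] at htendsto
    rw [tendsto_const_nhds_iff.1 htendsto, setLIntegral_congr_fun_ae (hT D hD)
      (hconst.mono fun x hx _ => by rw [hx]), setLIntegral_const]
  intro B hB
  rw [key B hB, ← Set.univ_inter C, key _ MeasurableSet.univ, measure_univ, mul_one, mul_comm]

theorem ae_condExpKernel_iInf_eq_zero_or_one (hℱ : Antitone ℱ) (hle : ∀ n, ℱ n ≤ mΩ)
    (hcg : ∀ n, @MeasurableSpace.CountablyGenerated Ω (ℱ n)) :
    ∀ᵐ θ ∂μ, ∀ B, MeasurableSet[⨅ n, ℱ n] B →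
      condExpKernel μ (⨅ n, ℱ n) θ B = 0 ∨ condExpKernel μ (⨅ n, ℱ n) θ B = 1 := by
  obtain ⟨P, hPc, hPpi, hgen⟩ :=
    (inferInstance : MeasurableSpace.CountablyGenerated Ω).exists_isPiSystem
  have hT : ⨅ n, ℱ n ≤ mΩ := (iInf_le ℱ 0).trans (hle 0)
  filter_upwards [(ae_ball_iff hPc).2 fun C hC => ae_condExpKernel_iInf_inter_eq_mul hℱ hle hcg
    (hgen ▸ MeasurableSpace.measurableSet_generateFrom hC)] with θ hθ B hB
  exact measure_eq_zero_or_one_of_forall_measure_inter_eq_mul hPpi hgen (hT B hB)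
    fun C hC => hθ C hC B hB

end TailKernel

section Coordinates

variable {A : Type} [MeasurableSpace A]

theorem coordSigmaN_mono : Monotone (coordSigmaN A) :=
  fun _ _ hst => biSup_mono fun _ hk => hst hk

theorem coordSigmaN_le_pi (s : Set ℕ) : coordSigmaN A s ≤ MeasurableSpace.pi :=
  iSup₂_le fun k _ => (measurable_pi_apply k).comap_le

theorem countablyGenerated_coordSigmaN [Countable A] (s : Set ℕ) :
    @MeasurableSpace.CountablyGenerated (ℕ → A) (coordSigmaN A s) :=
  .iSup fun _ => .iSup fun _ => .comap _

end Coordinates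

theorem tail_decomposition_components_mixing_general
    {A : Type} [Fintype A]
    [MeasurableSpace A] [MeasurableSingletonClass A]
    (ν : Measure (ℕ → A)) [IsProbabilityMeasure ν] :
    ∀ᵐ θ ∂ν, ∀ B : Set (ℕ → A), MeasurableSet[futureTail A] B →
      condExpKernel ν (futureTail A) θ B = 0 ∨
        condExpKernel ν (futureTail A) θ B = 1 :=
  ae_condExpKernel_iInf_eq_zero_or_one
    (fun _ _ h => coordSigmaN_mono (Set.Ici_subset_Ici.2 h)) (fun _ => coordSigmaN_le_pi _)
    (fun _ => countablyGenerated_coordSigmaN _)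

/-- (Berti–Rigo / JKS Theorem 1.) In the decomposition of a probability measure `ν` on
`A^ℕ` induced by the future tail σ-algebra — realized by a regular conditional
distribution of `ν` given the tail — almost every component is mixing, i.e. assigns
probability `0` or `1` to every tail event. -/
theorem tail_decomposition_components_mixing
    {A : Type} [Fintype A] [Nonempty A]
    [MeasurableSpace A] [MeasurableSingletonClass A]
    (ν : Measure (ℕ → A)) [IsProbabilityMeasure ν] :
    ∀ᵐ θ ∂ν, ∀ B : Set (ℕ → A), MeasurableSet[futureTail A] B →
      condExpKernel ν (futureTail A) θ B = 0 ∨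
        condExpKernel ν (futureTail A) θ B = 1 :=
  tail_decomposition_components_mixing_general ν
end
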